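/- Let $\{d_i\}$, $\{\lambda_i\}$ be nondecreasing real sequences with $\delta_k := \sum_{i=1}^k(d_i-\lambda_i) \ge 0$ for all $k$, and suppose $\delta_k < \alpha := \liminf_{i\to\infty}\delta_i$ for infinitely many $k$. Define $m_0 = 0$ and inductively $m_j = \min\{n > m_{j-1} : \delta_n \le \delta_k \text{ for all } k \ge n\}$; define $\tilde{d}_i = \lambda_i + (\delta_{m_j} - \delta_{m_{j-1}})$ if $i = m_j$ for some $j \ge 1$, and $\tilde{d}_i = \lambda_i$ otherwise (with $\delta_0 = 0$). Then: (a) each $m_j$ is well-defined and $\tilde{d}_i \ge \lambda_i$ for all $i$; (b) the sequence $\tilde{\delta}_k := \sum_{i=1}^k (\tilde{d}_i - \lambda_i)$ is nondecreasing in $k$; and (c) for each $j \ge 1$, writing $I_j = \{m_{j-1}+1, \ldots, m_j\}$, one has $\{d_i\}_{i \in I_j} \preccurlyeq \{\tilde{d}_i\}_{i \in I_j}$ in the sense of majorization. -/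
import Mathlib


open Filter

/-- Decreasing rearrangement of a finite real tuple. -/
noncomputable def decRearrange {N : ℕ} (a : Fin N → ℝ) : Fin N → ℝ :=
  fun i => a (Tuple.sort a i.rev)

/-- Majorization of finite real sequences: partial sums of the decreasing
rearrangements dominate, with equal total sums. -/
def Majorizes {N : ℕ} (a b : Fin N → ℝ) : Prop :=
  (∀ n : ℕ, ∑ i ∈ Finset.univ.filter (fun i : Fin N => (i : ℕ) < n), decRearrange a i
      ≤ ∑ i ∈ Finset.univ.filter (fun i : Fin N => (i : ℕ) < n), decRearrange b i) ∧
    ∑ i, a i = ∑ i, b i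

/-- Majorization of two real sequences restricted to a finite index set. -/
def MajorizesOn {ι : Type*} (s : Finset ι) (a b : ι → ℝ) : Prop :=
  Majorizes (fun i : Fin s.card => a (s.equivFin.symm i))
    (fun i : Fin s.card => b (s.equivFin.symm i))

/-- $\delta_k = \sum_{i<k} (d_i - \lambda_i)$. -/
def delta (d lam : ℕ → ℝ) (k : ℕ) : ℝ := ∑ i ∈ Finset.range k, (d i - lam i)

/-- $m_0 = 0$ and $m_{j+1} = \min\{n > m_j : \delta_n \le \delta_k \text{ for all } k \ge n\}$,
recording the consecutive global minima of the tails of $\{\delta_n\}$. -/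
noncomputable def mSeq (δ : ℕ → ℝ) : ℕ → ℕ
  | 0 => 0
  | j + 1 => sInf {n | mSeq δ j < n ∧ ∀ k, n ≤ k → δ n ≤ δ k}

open Classical in
/-- $\tilde d$ (0-indexed: index $i$ is position $i+1$): $\tilde d_i = \lambda_i +
(\delta_{m_j} - \delta_{m_{j-1}})$ when $i+1 = m_j$ for some $j \ge 1$, and
$\tilde d_i = \lambda_i$ otherwise. -/
noncomputable def dtil (lam δ : ℕ → ℝ) (i : ℕ) : ℝ :=
  if h : ∃ j, mSeq δ (j + 1) = i + 1 then
    lam i + (δ (i + 1) - δ (mSeq δ h.choose))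
  else lam i

/-- Sum over any `n`-element set of indices `< M` is at most the sum over the top `n` indices. -/
lemma sum_le_top_nat (d : ℕ → ℝ) (hd : Monotone d) :
    ∀ (n : ℕ) (M : ℕ) (s : Finset ℕ), s.card = n → (∀ x ∈ s, x < M) →
      ∑ x ∈ s, d x ≤ ∑ x ∈ Finset.Ico (M - n) M, d x := by
  intro n
  induction n with
  | zero => intro M s hs _; rw [Finset.card_eq_zero.mp hs]; simp
  | succ n ih =>
    intro M s hs hsM
    have hne : s.Nonempty := Finset.card_pos.mp (by omega)
    set x := s.max' hne with hx
    have hxs : x ∈ s := s.max'_mem hne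
    have hxm : ∀ y ∈ s, y ≤ x := fun y hy => Finset.le_max' s y hy
    have hxM : x < M := hsM x hxs
    have hM1 : M - 1 + 1 = M := by omega
    have herase : ∀ y ∈ s.erase x, y < M - 1 := by
      intro y hy
      have h1 := Finset.ne_of_mem_erase hy
      have h2 := hxm y (Finset.mem_of_mem_erase hy)
      omega
    have ihs := ih (M - 1) (s.erase x) (by rw [Finset.card_erase_of_mem hxs]; omega) herase
    have hdx : d x ≤ d (M - 1) := hd (by omega)
    have hsplit : ∑ p ∈ Finset.Ico (M - (n + 1)) M, d p
        = ∑ p ∈ Finset.Ico (M - 1 - n) (M - 1), d p + d (M - 1) := by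
      rw [← hM1, Finset.sum_Ico_succ_top (by omega)]
      have e1 : M - 1 + 1 - (n + 1) = M - 1 - n := by omega
      rw [e1]
      simp
    rw [hsplit, ← Finset.add_sum_erase s d hxs]
    linarith

/-- Sum of an antitone function over any `n`-element set is at most the sum over the first `n`. -/
lemma sum_anti_le_prefix {N : ℕ} (g : Fin N → ℝ) (hg : Antitone g) :
    ∀ (n : ℕ) (s : Finset (Fin N)), s.card = n →
      ∑ i ∈ s, g i ≤ ∑ i ∈ Finset.univ.filter (fun i : Fin N => (i : ℕ) < n), g i := by
  intro n
  induction n with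
  | zero => intro s hs; rw [Finset.card_eq_zero.mp hs]; simp
  | succ n ih =>
    intro s hs
    have hne : s.Nonempty := Finset.card_pos.mp (by omega)
    set x := s.max' hne with hx
    have hxs : x ∈ s := s.max'_mem hne
    have hxm : ∀ y ∈ s, y ≤ x := fun y hy => Finset.le_max' s y hy
    have hnN : n < N := by
      have h1 := s.card_le_univ
      rw [Fintype.card_fin] at h1
      omega
    have hnx : n ≤ (x : ℕ) := by
      have h1 : s.image Fin.val ⊆ Finset.range ((x : ℕ) + 1) := by
        intro k hk
        obtain ⟨y, hy, rfl⟩ := Finset.mem_image.mp hk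
        exact Finset.mem_range.mpr (Nat.lt_succ_of_le (hxm y hy))
      have h2 := Finset.card_le_card h1
      rw [Finset.card_image_of_injective _ Fin.val_injective, Finset.card_range] at h2
      omega
    set m : Fin N := ⟨n, hnN⟩ with hm
    have hgx : g x ≤ g m := hg (by rw [Fin.le_def]; exact hnx)
    have hfilter : Finset.univ.filter (fun i : Fin N => (i : ℕ) < n + 1)
        = insert m (Finset.univ.filter (fun i : Fin N => (i : ℕ) < n)) := by
      ext i
      simp only [Finset.mem_filter, Finset.mem_univ, true_and, Finset.mem_insert, Fin.ext_iff, hm]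
      omega
    have hmem : m ∉ Finset.univ.filter (fun i : Fin N => (i : ℕ) < n) := by simp [hm]
    have ihs := ih (s.erase x) (by rw [Finset.card_erase_of_mem hxs]; omega)
    rw [hfilter, Finset.sum_insert hmem, ← Finset.add_sum_erase s g hxs]
    exact add_le_add hgx ihs

lemma decRearrange_antitone {N : ℕ} (a : Fin N → ℝ) : Antitone (decRearrange a) := by
  intro i j hij
  exact Tuple.monotone_sort a (Fin.rev_le_rev.mpr hij)

lemma card_filter_lt (N n : ℕ) :
    (Finset.univ.filter (fun i : Fin N => (i : ℕ) < n)).card = min n N := by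
  rw [← Finset.card_range (min n N),
      ← Finset.card_image_of_injective (Finset.univ.filter (fun i : Fin N => (i : ℕ) < n))
        Fin.val_injective]
  congr 1
  ext k
  simp only [Finset.mem_image, Finset.mem_filter, Finset.mem_univ, true_and, Finset.mem_range,
    lt_min_iff]
  constructor
  · rintro ⟨i, hi, rfl⟩; exact ⟨hi, i.isLt⟩
  · rintro ⟨h1, h2⟩; exact ⟨⟨k, h2⟩, h1, rfl⟩

lemma sum_decRearrange_eq {N : ℕ} (a : Fin N → ℝ) (F : Finset (Fin N)) :
    ∑ i ∈ F, decRearrange a i = ∑ j ∈ F.image (fun i : Fin N => Tuple.sort a i.rev), a j := by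
  rw [Finset.sum_image (fun x _ y _ h => Fin.rev_injective ((Tuple.sort a).injective h))]
  rfl

lemma sum_le_decRearrange {N : ℕ} (a : Fin N → ℝ) (s : Finset (Fin N)) :
    ∑ i ∈ s, a i ≤ ∑ i ∈ Finset.univ.filter (fun i : Fin N => (i : ℕ) < s.card),
      decRearrange a i := by
  have hinj : Function.Injective (fun i : Fin N => ((Tuple.sort a).symm i).rev) :=
    fun x y h => (Tuple.sort a).symm.injective (Fin.rev_injective h)
  have h1 : ∑ i ∈ s, a i
      = ∑ j ∈ s.image (fun i : Fin N => ((Tuple.sort a).symm i).rev), decRearrange a j := by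
    rw [Finset.sum_image (fun x _ y _ h => hinj h)]
    apply Finset.sum_congr rfl
    intro i _
    simp [decRearrange, Fin.rev_rev]
  rw [h1, ← Finset.card_image_of_injective s hinj]
  exact sum_anti_le_prefix (decRearrange a) (decRearrange_antitone a) _ _ rfl

lemma maj_of_subsets {N : ℕ} (a b : Fin N → ℝ)
    (hsum : ∑ i, a i = ∑ i, b i)
    (h : ∀ t : Finset (Fin N), ∃ u : Finset (Fin N),
      u.card = t.card ∧ ∑ i ∈ t, a i ≤ ∑ i ∈ u, b i) :
    Majorizes a b := by
  refine ⟨fun n => ?_, hsum⟩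
  set F := Finset.univ.filter (fun i : Fin N => (i : ℕ) < n) with hF
  have h1 := sum_decRearrange_eq a F
  obtain ⟨u, hu1, hu2⟩ := h (F.image (fun i : Fin N => Tuple.sort a i.rev))
  have hcard : (F.image (fun i : Fin N => Tuple.sort a i.rev)).card = F.card :=
    Finset.card_image_of_injective _
      (fun x y hxy => Fin.rev_injective ((Tuple.sort a).injective hxy))
  have h2 := sum_le_decRearrange b u
  rw [hu1, hcard] at h2
  have h3 : Finset.univ.filter (fun i : Fin N => (i : ℕ) < F.card) = F := by
    rw [hF, card_filter_lt]
    ext i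
    simp only [Finset.mem_filter, Finset.mem_univ, true_and, lt_min_iff]
    exact ⟨fun hi => hi.1, fun hi => ⟨hi, i.isLt⟩⟩
  rw [h3] at h2
  calc ∑ i ∈ F, decRearrange a i = _ := h1
    _ ≤ ∑ i ∈ u, b i := hu2
    _ ≤ _ := h2

lemma majorizesOn_of (s : Finset ℕ) (a b : ℕ → ℝ)
    (hsum : ∑ p ∈ s, a p = ∑ p ∈ s, b p)
    (h : ∀ t ⊆ s, ∃ u, u ⊆ s ∧ u.card = t.card ∧ ∑ p ∈ t, a p ≤ ∑ p ∈ u, b p) :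
    MajorizesOn s a b := by
  set e := s.equivFin.symm with he
  have heinj : Function.Injective (fun i : Fin s.card => ((e i : ℕ))) :=
    fun x y hxy => e.injective (Subtype.ext hxy)
  have key : ∀ (f : ℕ → ℝ) (t : Finset (Fin s.card)),
      ∑ i ∈ t, f (e i) = ∑ p ∈ t.image (fun i => ((e i : ℕ))), f p :=
    fun f t => (Finset.sum_image (fun x _ y _ hxy => heinj hxy)).symm
  have himg : ∀ t : Finset (Fin s.card), (t.image (fun i => ((e i : ℕ)))).card = t.card :=
    fun t => Finset.card_image_of_injective _ heinj
  have hsub : ∀ t : Finset (Fin s.card), t.image (fun i => ((e i : ℕ))) ⊆ s := by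
    intro t p hp
    obtain ⟨i, _, rfl⟩ := Finset.mem_image.mp hp
    exact (e i).2
  apply maj_of_subsets
  · rw [key a Finset.univ, key b Finset.univ]
    have huniv : (Finset.univ.image (fun i : Fin s.card => ((e i : ℕ)))) = s := by
      apply Finset.eq_of_subset_of_card_le (hsub _)
      rw [himg]
      simp
    rw [huniv]
    exact hsum
  · intro t
    obtain ⟨u, hus, huc, hle⟩ := h (t.image (fun i => ((e i : ℕ)))) (hsub t)
    have himg2 : (Finset.univ.filter (fun i : Fin s.card => ((e i : ℕ)) ∈ u)).image
        (fun i => ((e i : ℕ))) = u := by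
      ext p
      simp only [Finset.mem_image, Finset.mem_filter, Finset.mem_univ, true_and]
      constructor
      · rintro ⟨i, hi, rfl⟩; exact hi
      · intro hp
        refine ⟨e.symm ⟨p, hus hp⟩, ?_, ?_⟩
        · rw [e.apply_symm_apply]; exact hp
        · rw [e.apply_symm_apply]
    refine ⟨Finset.univ.filter (fun i : Fin s.card => ((e i : ℕ)) ∈ u), ?_, ?_⟩
    · calc (Finset.univ.filter (fun i : Fin s.card => ((e i : ℕ)) ∈ u)).card
          = ((Finset.univ.filter (fun i : Fin s.card => ((e i : ℕ)) ∈ u)).image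
              (fun i => ((e i : ℕ)))).card := (himg _).symm
        _ = u.card := by rw [himg2]
        _ = t.card := by rw [huc, himg]
    · rw [key a t, key b]
      rw [himg2]
      exact hle

/-- Combinatorial core of the "mass vanishing at infinity, infinitely many dips"
case: with $\delta_k \ge 0$, $\delta_k < \alpha = \liminf \delta_i$ infinitely often,
(a) each $m_j$ is well defined and $\tilde d_i \ge \lambda_i$; (b) $\tilde\delta_k =
\sum_{i<k}(\tilde d_i - \lambda_i)$ is nondecreasing; (c) on each block
$I_j = (m_{j-1}, m_j]$ (as 0-indexed positions, $\mathrm{Ico}(m_{j-1}, m_j)$) one has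
$\{d_i\} \preccurlyeq \{\tilde d_i\}$. -/
theorem stmt_13 (d lam : ℕ → ℝ) (hd : Monotone d) (hlam : Monotone lam)
    (hδ : ∀ k, 0 ≤ delta d lam k)
    (hinf : {k | ((delta d lam k : ℝ) : EReal)
      < liminf (fun i => ((delta d lam i : ℝ) : EReal)) atTop}.Infinite) :
    (∀ j, {n | mSeq (delta d lam) j < n ∧
        ∀ k, n ≤ k → delta d lam n ≤ delta d lam k}.Nonempty) ∧
    (∀ i, lam i ≤ dtil lam (delta d lam) i) ∧
    Monotone (fun k => ∑ i ∈ Finset.range k, (dtil lam (delta d lam) i - lam i)) ∧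
    (∀ j, MajorizesOn (Finset.Ico (mSeq (delta d lam) j) (mSeq (delta d lam) (j + 1)))
      d (dtil lam (delta d lam))) := by
  set δ := delta d lam with hδdef
  have hδ0 : δ 0 = 0 := by simp [hδdef, delta]
  -- the core existence statement
  have hne : ∀ M : ℕ, ∃ n, M < n ∧ ∀ k, n ≤ k → δ n ≤ δ k := by
    intro M
    obtain ⟨k₀, hk₀mem, hk₀M⟩ := hinf.exists_gt M
    have hB : {i | δ i ≤ δ k₀}.Finite := by
      by_contra hBinf
      have hfreq : ∃ᶠ i in atTop, ((δ i : ℝ) : EReal) ≤ ((δ k₀ : ℝ) : EReal) := by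
        rw [Nat.frequently_atTop_iff_infinite]
        have heq : {i | ((δ i : ℝ) : EReal) ≤ ((δ k₀ : ℝ) : EReal)} = {i | δ i ≤ δ k₀} := by
          ext i
          simp [EReal.coe_le_coe_iff]
        rw [heq]
        exact hBinf
      have hle := liminf_le_of_frequently_le' hfreq
      exact absurd hle (not_le.mpr hk₀mem)
    have hC : ({i | δ i ≤ δ k₀} ∩ Set.Ioi M).Finite := hB.inter_of_left _
    have hCne : hC.toFinset.Nonempty := by
      rw [Set.Finite.toFinset_nonempty]
      exact ⟨k₀, show δ k₀ ≤ δ k₀ from le_refl _, hk₀M⟩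
    obtain ⟨n, hnC, hnmin⟩ := hC.toFinset.exists_min_image δ hCne
    rw [Set.Finite.mem_toFinset] at hnC
    refine ⟨n, hnC.2, fun k hk => ?_⟩
    by_contra hlt
    push_neg at hlt
    have hkC : k ∈ hC.toFinset := by
      rw [Set.Finite.mem_toFinset]
      exact ⟨le_trans hlt.le hnC.1, lt_of_lt_of_le hnC.2 hk⟩
    exact absurd (hnmin k hkC) (not_le.mpr hlt)
  have ha : ∀ j, {n | mSeq δ j < n ∧ ∀ k, n ≤ k → δ n ≤ δ k}.Nonempty := by
    intro j
    obtain ⟨n, h1, h2⟩ := hne (mSeq δ j)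
    exact ⟨n, h1, h2⟩
  have hstep : ∀ j, mSeq δ j < mSeq δ (j + 1) ∧
      ∀ k, mSeq δ (j + 1) ≤ k → δ (mSeq δ (j + 1)) ≤ δ k := by
    intro j
    have h := Nat.sInf_mem (ha j)
    rw [show mSeq δ (j + 1) = sInf {n | mSeq δ j < n ∧ ∀ k, n ≤ k → δ n ≤ δ k} from rfl]
    exact h
  have hmono : StrictMono (mSeq δ) := strictMono_nat_of_lt_succ (fun j => (hstep j).1)
  have hmin : ∀ j k, mSeq δ j ≤ k → δ (mSeq δ j) ≤ δ k := by
    intro j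
    cases j with
    | zero => intro k _; rw [show mSeq δ 0 = 0 from rfl, hδ0]; exact hδ k
    | succ j => exact (hstep j).2
  have dtil_spec : ∀ j i, mSeq δ (j + 1) = i + 1 →
      dtil lam δ i = lam i + (δ (mSeq δ (j + 1)) - δ (mSeq δ j)) := by
    intro j i hj
    have hex : ∃ j', mSeq δ (j' + 1) = i + 1 := ⟨j, hj⟩
    rw [dtil, dif_pos hex]
    have hcs : mSeq δ (hex.choose + 1) = i + 1 := hex.choose_spec
    have hcj : hex.choose = j := by
      have := hmono.injective (hcs.trans hj.symm)
      omega
    rw [hcj, hj]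
  have dtil_lam : ∀ i, (¬ ∃ j, mSeq δ (j + 1) = i + 1) → dtil lam δ i = lam i := by
    intro i hi
    rw [dtil, dif_neg hi]
  have hb : ∀ i, lam i ≤ dtil lam δ i := by
    intro i
    by_cases h : ∃ j, mSeq δ (j + 1) = i + 1
    · obtain ⟨j, hj⟩ := h
      rw [dtil_spec j i hj]
      have h1 : δ (mSeq δ j) ≤ δ (mSeq δ (j + 1)) :=
        hmin j _ (hmono (Nat.lt_succ_self j)).le
      linarith
    · rw [dtil_lam i h]
  refine ⟨ha, hb, ?_, ?_⟩
  · apply monotone_nat_of_le_succ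
    intro k
    rw [Finset.sum_range_succ]
    have := hb k
    linarith
  · intro j
    set m := mSeq δ j with hmdef
    set M := mSeq δ (j + 1) with hMdef
    have hmM : m < M := (hstep j).1
    have hdsum : ∀ a, a ≤ M → ∑ p ∈ Finset.Ico a M, (d p - lam p) = δ M - δ a := by
      intro a haM
      rw [Finset.sum_Ico_eq_sub _ haM]
      rfl
    have hlast : dtil lam δ (M - 1) = lam (M - 1) + (δ M - δ m) :=
      dtil_spec j (M - 1) (by omega)
    have hnot : ∀ p, m ≤ p → p + 1 < M → dtil lam δ p = lam p := by
      intro p h1 h2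
      apply dtil_lam
      rintro ⟨j', hj'⟩
      have hlt1 : mSeq δ j < mSeq δ (j' + 1) := by omega
      have hlt2 : mSeq δ (j' + 1) < mSeq δ (j + 1) := by omega
      have e1 := hmono.lt_iff_lt.mp hlt1
      have e2 := hmono.lt_iff_lt.mp hlt2
      omega
    have hsum_dtil : ∀ a, m ≤ a → a < M →
        ∑ p ∈ Finset.Ico a M, dtil lam δ p
          = (∑ p ∈ Finset.Ico a M, lam p) + (δ M - δ m) := by
      intro a h1 h2
      have hM1 : M - 1 + 1 = M := by omega
      have h3 : a ≤ M - 1 := by omega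
      rw [← hM1, Finset.sum_Ico_succ_top h3, Finset.sum_Ico_succ_top h3 lam, hM1, hlast]
      have h4 : ∑ p ∈ Finset.Ico a (M - 1), dtil lam δ p
          = ∑ p ∈ Finset.Ico a (M - 1), lam p := by
        apply Finset.sum_congr rfl
        intro p hp
        rw [Finset.mem_Ico] at hp
        exact hnot p (le_trans h1 hp.1) (by omega)
      rw [h4]
      ring
    apply majorizesOn_of
    · have h1 := hdsum m hmM.le
      rw [Finset.sum_sub_distrib] at h1
      rw [hsum_dtil m le_rfl hmM]
      linarith
    · intro t ht
      have hnle : t.card ≤ M - m := by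
        have := Finset.card_le_card ht
        rwa [Nat.card_Ico] at this
      rcases Nat.eq_zero_or_pos t.card with h0 | hpos
      · refine ⟨∅, Finset.empty_subset _, by simp [h0], ?_⟩
        rw [Finset.card_eq_zero.mp h0]
        simp
      · set n := t.card with hn
        refine ⟨Finset.Ico (M - n) M, ?_, ?_, ?_⟩
        · intro p hp
          rw [Finset.mem_Ico] at hp ⊢
          omega
        · rw [Nat.card_Ico, hn]
          omega
        · have h1 : ∑ p ∈ t, d p ≤ ∑ p ∈ Finset.Ico (M - n) M, d p :=
            sum_le_top_nat d hd n M t rfl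
              (fun x hx => (Finset.mem_Ico.mp (ht hx)).2)
          have h2 := hdsum (M - n) (by omega)
          rw [Finset.sum_sub_distrib] at h2
          have h3 := hsum_dtil (M - n) (by omega) (by omega)
          have h4 : δ m ≤ δ (M - n) := hmin j _ (by omega)
          linarith
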